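/- arXiv:2110.15539 — 4 statements merged into one kernel-verified Lean document; each statement's English description precedes it below -/
import Mathlib

section
/- Let (S_i, I_i, R_i), i = 1,…,N, solve the networked SIR system on [0,∞), with 0 ≤ S_i(t) ≤ S_i(0), 0 ≤ I_i(t) ≤ 1, 0 ≤ a^{ij}(t) ≤ L^{-γ} for i ≠ j, a^{ii} = 0, and b^i > 0. If min_i b^i > κ₁ L^{−γ} max_i Σ_{j ≠ i} S_j(0), then Σ_{i=1}^N I_i(t) decays to zero exponentially fast: Σ_i I_i(t) ≤ (Σ_i I_i(0)) e^{−μ t} where μ := min_i b^i − κ₁ L^{−γ} max_i Σ_{j≠i} S_j(0) > 0. -/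
theorem networked_sir_relaxed_decay (N : ℕ) (κ₁ L γ : ℝ)
    (hκ : 0 < κ₁) (hL : 0 < L) (hγ : 0 ≤ γ)
    (b : Fin N → ℝ) (hb : ∀ i, 0 < b i)
    (a : Fin N → Fin N → ℝ → ℝ)
    (ha_nonneg : ∀ i j t, 0 ≤ a i j t)
    (ha_bdd : ∀ i j (t : ℝ), i ≠ j → a i j t ≤ L ^ (-γ))
    (ha_diag : ∀ i (t : ℝ), a i i t = 0)
    (S I R : Fin N → ℝ → ℝ)
    (hS : ∀ i (t : ℝ), HasDerivAt (S i) (-κ₁ * ∑ j, a i j t * S i t * I j t) t)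
    (hI : ∀ i (t : ℝ), HasDerivAt (I i) (κ₁ * ∑ j, a i j t * S i t * I j t - b i * I i t) t)
    (hR : ∀ i (t : ℝ), HasDerivAt (R i) (b i * I i t) t)
    (hSrange : ∀ i (t : ℝ), 0 ≤ t → 0 ≤ S i t ∧ S i t ≤ S i 0)
    (hIrange : ∀ i (t : ℝ), 0 ≤ t → 0 ≤ I i t ∧ I i t ≤ 1)
    (μ : ℝ)
    (hμ_def : μ = (⨅ i, b i) - κ₁ * L ^ (-γ) * (⨆ i, ∑ j ∈ Finset.univ.erase i, S j 0))
    (hμ : 0 < μ) :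
    ∀ t : ℝ, 0 ≤ t → (∑ i, I i t) ≤ (∑ i, I i 0) * Real.exp (-μ * t) := by
  rcases Nat.eq_zero_or_pos N with hN | hN
  · exfalso
    subst hN
    haveI : IsEmpty (Fin 0) := inferInstance
    rw [Real.iInf_of_isEmpty, Real.iSup_of_isEmpty] at hμ_def
    simp at hμ_def
    rw [hμ_def] at hμ
    exact lt_irrefl 0 hμ
  haveI : Nonempty (Fin N) := ⟨⟨0, hN⟩⟩
  have hc0 : (0:ℝ) ≤ L ^ (-γ) := (Real.rpow_pos_of_pos hL _).le
  set c := L ^ (-γ) with hc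
  set M := ⨆ i, ∑ j ∈ Finset.univ.erase i, S j 0 with hM
  set m := ⨅ i, b i with hm
  have hMbdd : BddAbove (Set.range fun i => ∑ j ∈ Finset.univ.erase i, S j 0) :=
    Set.Finite.bddAbove (Set.finite_range _)
  have hmbdd : BddBelow (Set.range b) := Set.Finite.bddBelow (Set.finite_range b)
  have key : ∀ t : ℝ, 0 ≤ t →
      (∑ i, (κ₁ * ∑ j, a i j t * S i t * I j t - b i * I i t)) ≤ -μ * ∑ i, I i t := by
    intro t ht
    have hI0 : ∀ j, 0 ≤ I j t := fun j => (hIrange j t ht).1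
    have hS0 : ∀ i, 0 ≤ S i 0 := fun i => (hSrange i 0 le_rfl).1
    have hstep1 : ∑ i, ∑ j, a i j t * S i t * I j t
        ≤ ∑ j, (c * ∑ i ∈ Finset.univ.erase j, S i 0) * I j t := by
      rw [Finset.sum_comm]
      refine Finset.sum_le_sum fun j _ => ?_
      have hz : a j j t * S j t * I j t = 0 := by rw [ha_diag]; ring
      rw [show (∑ i : Fin N, a i j t * S i t * I j t)
          = ∑ i ∈ Finset.univ.erase j, a i j t * S i t * I j t from
        (Finset.sum_erase (f := fun i => a i j t * S i t * I j t) Finset.univ hz).symm, Finset.mul_sum, Finset.sum_mul]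
      refine Finset.sum_le_sum fun i hi => ?_
      have hij : i ≠ j := Finset.ne_of_mem_erase hi
      have h1 : a i j t * S i t ≤ c * S i 0 :=
        mul_le_mul (ha_bdd i j t hij) (hSrange i t ht).2 (hSrange i t ht).1 hc0
      exact mul_le_mul_of_nonneg_right h1 (hI0 j)
    have hstep2 : ∑ j, (c * ∑ i ∈ Finset.univ.erase j, S i 0) * I j t
        ≤ ∑ j, (c * M) * I j t := by
      refine Finset.sum_le_sum fun j _ => ?_
      exact mul_le_mul_of_nonneg_right
        (mul_le_mul_of_nonneg_left (le_ciSup hMbdd j) hc0) (hI0 j)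
    have total : ∑ i, ∑ j, a i j t * S i t * I j t ≤ c * M * ∑ j, I j t := by
      calc ∑ i, ∑ j, a i j t * S i t * I j t ≤ ∑ j, (c * M) * I j t := hstep1.trans hstep2
        _ = c * M * ∑ j, I j t := by rw [Finset.mul_sum]
    have hstep3 : m * ∑ i, I i t ≤ ∑ i, b i * I i t := by
      rw [Finset.mul_sum]
      exact Finset.sum_le_sum fun i _ =>
        mul_le_mul_of_nonneg_right (ciInf_le hmbdd i) (hI0 i)
    have expand : ∑ i, (κ₁ * ∑ j, a i j t * S i t * I j t - b i * I i t)
        = κ₁ * (∑ i, ∑ j, a i j t * S i t * I j t) - ∑ i, b i * I i t := by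
      rw [Finset.sum_sub_distrib, Finset.mul_sum]
    rw [expand, hμ_def]
    have h4 : κ₁ * (∑ i, ∑ j, a i j t * S i t * I j t) ≤ κ₁ * (c * M * ∑ j, I j t) :=
      mul_le_mul_of_nonneg_left total hκ.le
    nlinarith [h4, hstep3]
  intro t ht
  set f : ℝ → ℝ := fun s => ∑ i, I i s with hf
  have hf' : ∀ s : ℝ, HasDerivAt f
      (∑ i, (κ₁ * ∑ j, a i j s * S i s * I j s - b i * I i s)) s :=
    fun s => HasDerivAt.fun_sum (fun i _ => hI i s)
  set g : ℝ → ℝ := fun s => f s * Real.exp (μ * s) with hg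
  have hE' : ∀ s : ℝ, HasDerivAt (fun u : ℝ => Real.exp (μ * u)) (Real.exp (μ * s) * μ) s :=
    fun s => by simpa using ((hasDerivAt_id s).const_mul μ).exp
  have hg' : ∀ s : ℝ, HasDerivAt g
      ((∑ i, (κ₁ * ∑ j, a i j s * S i s * I j s - b i * I i s)) * Real.exp (μ * s)
        + f s * (Real.exp (μ * s) * μ)) s :=
    fun s => (hf' s).mul (hE' s)
  have hanti : AntitoneOn g (Set.Ici (0:ℝ)) := by
    apply antitoneOn_of_deriv_nonpos (convex_Ici 0)
    · exact (Differentiable.continuous fun s => (hg' s).differentiableAt).continuousOn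
    · exact fun x _ => (hg' x).differentiableAt.differentiableWithinAt
    · intro x hx
      rw [interior_Ici] at hx
      rw [(hg' x).deriv]
      have hk := key x (le_of_lt hx)
      have hEpos := Real.exp_pos (μ * x)
      have hfx : f x = ∑ i, I i x := rfl
      nlinarith [hk, hEpos]
  have h0t : g t ≤ g 0 := hanti Set.self_mem_Ici ht ht
  have hg0 : g 0 = f 0 := by simp [hg]
  have hEpos := Real.exp_pos (μ * t)
  have : f t * Real.exp (μ * t) ≤ f 0 := by rw [← hg0]; exact h0t
  have hfin : f t ≤ f 0 * Real.exp (-(μ * t)) := by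
    have := mul_le_mul_of_nonneg_right this (Real.exp_nonneg (-(μ * t)))
    calc f t = f t * Real.exp (μ * t) * Real.exp (-(μ * t)) := by
          rw [mul_assoc, ← Real.exp_add]; simp
      _ ≤ f 0 * Real.exp (-(μ * t)) := this
  simpa [neg_mul] using hfin
end

section
/- Let x : [0, ∞) → ℝ solve ẋ = −(x/|x|^α)(κ₂Ψ_a − κ₃Ψ_r/|x|^{β−α}) with x(0) > 0, where 1 ≤ α < β, κ₂ = κ₃ = 1, and the time-dependent coefficients satisfy ε_a ≤ Ψ_a(t) ≤ 1+ε_a and ε_r ≤ Ψ_r(t) ≤ 1+ε_r for positive constants ε_a, ε_r. Then for all t ≥ 0, min{ x(0), (ε_r/(1+ε_a))^{1/(β−α)} } ≤ x(t) ≤ max{ x(0), ((1+ε_r)/ε_a)^{1/(β−α)} }. -/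
open Set Filter Topology

/-- First crossing from above: if `x` is continuous on `[0,∞)`, starts above `c`
and is below `c` at time `T ≥ 0`, then there is a first time `T0 ∈ (0, T]` with
`x T0 = c` and `x > c` strictly before `T0`. -/
lemma first_crossing_aux (x : ℝ → ℝ) (hcont : ∀ u : ℝ, 0 ≤ u → ContinuousAt x u)
    (c T : ℝ) (hT : 0 ≤ T) (h0 : c < x 0) (hT' : x T < c) :
    ∃ T0, 0 < T0 ∧ T0 ≤ T ∧ x T0 = c ∧ ∀ u, 0 ≤ u → u < T0 → c < x u := by
  set S : Set ℝ := {u | u ∈ Set.Icc (0:ℝ) T ∧ x u ≤ c} with hS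
  have hTS : T ∈ S := ⟨⟨hT, le_refl T⟩, hT'.le⟩
  have hSne : S.Nonempty := ⟨T, hTS⟩
  have hSbdd : BddBelow S := ⟨0, fun u hu => hu.1.1⟩
  set T0 := sInf S with hT0
  have hT0nn : 0 ≤ T0 := le_csInf hSne fun u hu => hu.1.1
  have hT0leT : T0 ≤ T := csInf_le hSbdd hTS
  have hbefore : ∀ u, 0 ≤ u → u < T0 → c < x u := by
    intro u hu huT0
    by_contra h
    push_neg at h
    have : u ∈ S := ⟨⟨hu, le_trans huT0.le hT0leT⟩, h⟩
    exact absurd (csInf_le hSbdd this) (not_le.2 huT0)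
  have hxT0le : x T0 ≤ c := by
    by_contra h
    push_neg at h
    have hc : ContinuousAt x T0 := hcont T0 hT0nn
    have hev : ∀ᶠ u in 𝓝 T0, c < x u := hc.eventually_const_lt h
    rcases Metric.eventually_nhds_iff.1 hev with ⟨ε, hε, hball⟩
    rcases exists_lt_of_csInf_lt hSne (show sInf S < T0 + ε by
      rw [← hT0]; linarith) with ⟨u, huS, huε⟩
    have hu1 : T0 ≤ u := csInf_le hSbdd huS
    have : dist u T0 < ε := by
      rw [Real.dist_eq, abs_of_nonneg (by linarith)]
      linarith
    exact absurd huS.2 (not_le.2 (hball this))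
  have hT0pos : 0 < T0 := by
    rcases lt_or_eq_of_le hT0nn with h | h
    · exact h
    · exfalso; rw [← h] at hxT0le; linarith
  have hxT0ge : c ≤ x T0 := by
    have hc : ContinuousAt x T0 := hcont T0 hT0nn
    have htend : Tendsto x (𝓝[<] T0) (𝓝 (x T0)) :=
      hc.continuousWithinAt.tendsto
    have hev : ∀ᶠ u in 𝓝[<] T0, c ≤ x u := by
      filter_upwards [Ioo_mem_nhdsLT_of_mem (⟨hT0pos, le_refl T0⟩ : T0 ∈ Set.Ioc 0 T0)]
        with u hu
      exact (hbefore u hu.1.le hu.2).le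
    exact ge_of_tendsto htend hev
  exact ⟨T0, hT0pos, hT0leT, le_antisymm hxT0le hxT0ge, hbefore⟩

theorem two_particle_relative_distance_bounds (α β εa εr : ℝ)
    (hα : 1 ≤ α) (hαβ : α < β) (hεa : 0 < εa) (hεr : 0 < εr)
    (Ψa Ψr : ℝ → ℝ)
    (hΨa : ∀ t : ℝ, εa ≤ Ψa t ∧ Ψa t ≤ 1 + εa)
    (hΨr : ∀ t : ℝ, εr ≤ Ψr t ∧ Ψr t ≤ 1 + εr)
    (x : ℝ → ℝ) (hx0 : 0 < x 0)
    (hx : ∀ t : ℝ, 0 ≤ t →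
      HasDerivAt x (-(x t / |x t| ^ α) * (Ψa t - Ψr t / |x t| ^ (β - α))) t) :
    ∀ t : ℝ, 0 ≤ t →
      min (x 0) ((εr / (1 + εa)) ^ (1 / (β - α))) ≤ x t ∧
      x t ≤ max (x 0) (((1 + εr) / εa) ^ (1 / (β - α))) := by
  have hγ0 : (0:ℝ) < β - α := by linarith
  have hεa1 : (0:ℝ) < 1 + εa := by linarith
  have hεr1 : (0:ℝ) < 1 + εr := by linarith
  set L := (εr / (1 + εa)) ^ (1 / (β - α)) with hLdef
  set U := ((1 + εr) / εa) ^ (1 / (β - α)) with hUdef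
  have hLpos : 0 < L := Real.rpow_pos_of_pos (div_pos hεr hεa1) _
  have hUpos : 0 < U := Real.rpow_pos_of_pos (div_pos hεr1 hεa) _
  have hLpow : L ^ (β - α) = εr / (1 + εa) := by
    rw [hLdef, ← Real.rpow_mul (div_pos hεr hεa1).le,
      one_div_mul_cancel hγ0.ne', Real.rpow_one]
  have hUpow : U ^ (β - α) = (1 + εr) / εa := by
    rw [hUdef, ← Real.rpow_mul (div_pos hεr1 hεa).le,
      one_div_mul_cancel hγ0.ne', Real.rpow_one]
  have hcont : ∀ u : ℝ, 0 ≤ u → ContinuousAt x u := fun u hu => (hx u hu).continuousAt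
  intro t ht
  constructor
  · -- lower bound
    by_contra h
    push_neg at h
    have hm : 0 < min (x 0) L := lt_min hx0 hLpos
    set c := (max (x t) 0 + min (x 0) L) / 2 with hcdef
    have hmax : max (x t) 0 < min (x 0) L := max_lt h hm
    have hc1 : 0 < c := by
      have : (0:ℝ) ≤ max (x t) 0 := le_max_right _ _
      rw [hcdef]; linarith
    have hc2 : c < min (x 0) L := by rw [hcdef]; linarith
    have hc3 : x t < c := by
      have : x t ≤ max (x t) 0 := le_max_left _ _
      rw [hcdef]; linarith
    have hcx0 : c < x 0 := lt_of_lt_of_le hc2 (min_le_left _ _)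
    have hcL : c < L := lt_of_lt_of_le hc2 (min_le_right _ _)
    obtain ⟨T0, hT0pos, hT0le, hxT0, hbefore⟩ :=
      first_crossing_aux x hcont c t ht hcx0 hc3
    have hcpow : 0 < c ^ (β - α) := Real.rpow_pos_of_pos hc1 _
    -- derivative at T0
    have hd := hx T0 hT0pos.le
    rw [hxT0, abs_of_pos hc1] at hd
    set d := -(c / c ^ α) * (Ψa T0 - Ψr T0 / c ^ (β - α)) with hddef
    -- d > 0
    have hcltL : c ^ (β - α) < εr / (1 + εa) := by
      rw [← hLpow]; exact Real.rpow_lt_rpow hc1.le hcL hγ0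
    have hE : Ψa T0 - Ψr T0 / c ^ (β - α) < 0 := by
      have h1 : Ψa T0 ≤ 1 + εa := (hΨa T0).2
      have h2 : εr / c ^ (β - α) ≤ Ψr T0 / c ^ (β - α) := by gcongr; exact (hΨr T0).1
      have h3 : 1 + εa < εr / c ^ (β - α) := by
        rw [lt_div_iff₀ hcpow]
        calc (1 + εa) * c ^ (β - α) < (1 + εa) * (εr / (1 + εa)) := by gcongr
          _ = εr := by field_simp
      linarith
    have hdpos : 0 < d := by
      rw [hddef, neg_mul]
      have hq : 0 < c / c ^ α := div_pos hc1 (Real.rpow_pos_of_pos hc1 α)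
      nlinarith [mul_pos hq (neg_pos.2 hE)]
    -- left slopes are nonpositive, so d ≤ 0
    have hslope : Tendsto (slope x T0) (𝓝[≠] T0) (𝓝 d) :=
      hasDerivAt_iff_tendsto_slope.1 hd
    have hslope' : Tendsto (slope x T0) (𝓝[<] T0) (𝓝 d) :=
      hslope.mono_left (nhdsWithin_mono _ fun u hu => ne_of_lt hu)
    have hev : ∀ᶠ u in 𝓝[<] T0, slope x T0 u ≤ 0 := by
      filter_upwards [Ioo_mem_nhdsLT_of_mem (⟨hT0pos, le_refl T0⟩ : T0 ∈ Set.Ioc 0 T0)]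
        with u hu
      have hxu : c < x u := hbefore u hu.1.le hu.2
      rw [slope_def_field]
      apply le_of_lt
      apply div_neg_of_pos_of_neg
      · rw [hxT0]; linarith
      · linarith [hu.2]
    have : d ≤ 0 := le_of_tendsto hslope' hev
    linarith
  · -- upper bound
    by_contra h
    push_neg at h
    set M := max (x 0) U with hMdef
    set c := (x t + M) / 2 with hcdef
    have hMU : U ≤ M := le_max_right _ _
    have hMx0 : x 0 ≤ M := le_max_left _ _
    have hc2 : M < c := by rw [hcdef]; linarith
    have hc3 : c < x t := by rw [hcdef]; linarith
    have hc1 : 0 < c := lt_trans (lt_of_lt_of_le hUpos hMU) hc2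
    have hcx0 : x 0 < c := lt_of_le_of_lt hMx0 hc2
    have hcU : U < c := lt_of_le_of_lt hMU hc2
    -- apply first crossing to -x with level -c
    obtain ⟨T0, hT0pos, hT0le, hxT0', hbefore'⟩ :=
      first_crossing_aux (fun u => -x u) (fun u hu => (hcont u hu).neg) (-c) t ht
        (by simpa using hcx0) (by simpa using hc3)
    have hxT0 : x T0 = c := by
      have : -x T0 = -c := hxT0'
      linarith
    have hbefore : ∀ u, 0 ≤ u → u < T0 → x u < c := by
      intro u hu huT0
      have := hbefore' u hu huT0
      simpa using this
    have hcpow : 0 < c ^ (β - α) := Real.rpow_pos_of_pos hc1 _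
    have hd := hx T0 hT0pos.le
    rw [hxT0, abs_of_pos hc1] at hd
    set d := -(c / c ^ α) * (Ψa T0 - Ψr T0 / c ^ (β - α)) with hddef
    -- d < 0
    have hcgtU : (1 + εr) / εa < c ^ (β - α) := by
      rw [← hUpow]; exact Real.rpow_lt_rpow hUpos.le hcU hγ0
    have hE : 0 < Ψa T0 - Ψr T0 / c ^ (β - α) := by
      have h1 : εa ≤ Ψa T0 := (hΨa T0).1
      have h2 : Ψr T0 / c ^ (β - α) ≤ (1 + εr) / c ^ (β - α) := by gcongr; exact (hΨr T0).2
      have h3 : (1 + εr) / c ^ (β - α) < εa := by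
        rw [div_lt_iff₀ hcpow]
        calc 1 + εr = εa * ((1 + εr) / εa) := by field_simp
          _ < εa * c ^ (β - α) := by gcongr
      linarith
    have hdneg : d < 0 := by
      rw [hddef, neg_mul, neg_lt_zero]
      exact mul_pos (div_pos hc1 (Real.rpow_pos_of_pos hc1 α)) hE
    -- left slopes are nonnegative, so d ≥ 0
    have hslope : Tendsto (slope x T0) (𝓝[≠] T0) (𝓝 d) :=
      hasDerivAt_iff_tendsto_slope.1 hd
    have hslope' : Tendsto (slope x T0) (𝓝[<] T0) (𝓝 d) :=
      hslope.mono_left (nhdsWithin_mono _ fun u hu => ne_of_lt hu)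
    have hev : ∀ᶠ u in 𝓝[<] T0, 0 ≤ slope x T0 u := by
      filter_upwards [Ioo_mem_nhdsLT_of_mem (⟨hT0pos, le_refl T0⟩ : T0 ∈ Set.Ioc 0 T0)]
        with u hu
      have hxu : x u < c := hbefore u hu.1.le hu.2
      rw [slope_def_field]
      apply le_of_lt
      apply div_pos_of_neg_of_neg
      · rw [hxT0]; linarith
      · linarith [hu.2]
    have : 0 ≤ d := ge_of_tendsto hslope' hev
    linarith
end

section
/- Consider N particles x_i in ℝ^d governed by ẋ_i = (κ₂/N)Σ_{j≠i} Ψ_a^{ij}(x_j−x_i)/‖x_j−x_i‖^α + (κ₃/N)Σ_{j≠i} Ψ_r^{ij}(x_i−x_j)/‖x_i−x_j‖^β with 1 ≤ α < β, κ₂, κ₃ > 0, and weights satisfying m_a ≤ Ψ_a^{ij} ≤ M_a and m_r ≤ Ψ_r^{ij} ≤ M_r. Let D(t) := max_{i≠j} ‖x_i(t)−x_j(t)‖ denote the spatial diameter. Then along any interval where D(t) = ‖x_i(t)−x_j(t)‖ for fixed indices i, j, one has (d/dt)D² ≥ −(4κ₂M_a/N)D^{2−α} + (4κ₃m_r/N)D^{2−β}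 + correction terms that are nonnegative whenever ‖x_k−x_i‖ and ‖x_k−x_j‖ ≤ (κ₃m_r/(κ₂M_a))^{1/(β−α)} for all k ≠ i,j. In particular, if D(0) > 0, then D(t) ≥ min{D(0), (κ₃m_r/(κ₂M_a))^{1/(β−α)}} for all t ≥ 0. -/
open Set Filter Finset

local notation "⟪" x ", " y "⟫" => @inner ℝ _ _ x y

set_option maxHeartbeats 2000000 in
theorem diameter_lower_bound (N d : ℕ) (hN : 2 ≤ N) (α β κ₂ κ₃ ma Ma mr Mr : ℝ)
    (hα : 1 ≤ α) (hαβ : α < β) (hκ₂ : 0 < κ₂) (hκ₃ : 0 < κ₃)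
    (hma : 0 < ma) (hmr : 0 < mr)
    (Ψa Ψr : Fin N → Fin N → ℝ → ℝ)
    (hΨa : ∀ i j (t : ℝ), ma ≤ Ψa i j t ∧ Ψa i j t ≤ Ma)
    (hΨr : ∀ i j (t : ℝ), mr ≤ Ψr i j t ∧ Ψr i j t ≤ Mr)
    (x : Fin N → ℝ → EuclideanSpace ℝ (Fin d))
    (hx : ∀ i, ∀ t : ℝ, 0 ≤ t →
      HasDerivAt (x i)
        ((κ₂ / N) • ∑ j ∈ Finset.univ.erase i,
            Ψa i j t • ((‖x j t - x i t‖ ^ α)⁻¹ • (x j t - x i t)) +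
         (κ₃ / N) • ∑ j ∈ Finset.univ.erase i,
            Ψr i j t • ((‖x i t - x j t‖ ^ β)⁻¹ • (x i t - x j t))) t)
    (D : ℝ → ℝ)
    (hD : ∀ t : ℝ, IsGreatest {r : ℝ | ∃ i j : Fin N, i ≠ j ∧ r = ‖x i t - x j t‖} (D t))
    (hD0 : 0 < D 0) :
    ∀ t : ℝ, 0 ≤ t → min (D 0) ((κ₃ * mr / (κ₂ * Ma)) ^ (1 / (β - α))) ≤ D t := by
  classical
  have i0 : Fin N := ⟨0, by omega⟩
  have hMa : 0 < Ma := lt_of_lt_of_le hma ((hΨa i0 i0 0).1.trans (hΨa i0 i0 0).2)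
  have hNpos : (0:ℝ) < (N:ℝ) := by exact_mod_cast (by omega : 0 < N)
  set δ₂ : ℝ := (κ₃ * mr / (κ₂ * Ma)) ^ (1 / (β - α)) with hδ₂def
  have hXpos : (0:ℝ) < κ₃ * mr / (κ₂ * Ma) := by positivity
  have hδ₂ : 0 < δ₂ := Real.rpow_pos_of_pos hXpos _
  have hβα : 0 < β - α := sub_pos.2 hαβ
  have hαpos : 0 < α := lt_of_lt_of_le one_pos hα
  have hβpos : 0 < β := lt_trans hαpos hαβ
  have hDub : ∀ (t : ℝ) (p q : Fin N), p ≠ q → ‖x p t - x q t‖ ≤ D t :=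
    fun t p q h => (hD t).2 ⟨p, q, h, rfl⟩
  have hDnn : ∀ t, 0 ≤ D t := by
    intro t
    obtain ⟨i, j, hij, h⟩ := (hD t).1
    rw [h]; exact norm_nonneg _
  -- continuity of D on [0, ∞)
  have hxc : ∀ i (t : ℝ), 0 ≤ t → ContinuousAt (x i) t :=
    fun i t ht => (hx i t ht).continuousAt
  have hPne : (Finset.univ : Finset (Fin N × Fin N)).Nonempty :=
    ⟨(⟨0, by omega⟩, ⟨0, by omega⟩), Finset.mem_univ _⟩
  have hDeq : ∀ t, D t = (Finset.univ : Finset (Fin N × Fin N)).sup' hPne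
      (fun p => ‖x p.1 t - x p.2 t‖) := by
    intro t
    apply le_antisymm
    · obtain ⟨i, j, hij, hE⟩ := (hD t).1
      rw [hE]
      exact Finset.le_sup' (fun p : Fin N × Fin N => ‖x p.1 t - x p.2 t‖) (Finset.mem_univ (i, j))
    · refine Finset.sup'_le _ _ fun p _ => ?_
      by_cases hp : p.1 = p.2
      · rw [hp]; simpa using hDnn t
      · exact hDub t p.1 p.2 hp
  have hDcont : ContinuousOn D (Ici (0:ℝ)) := by
    have h2 : ContinuousOn (fun t => (Finset.univ : Finset (Fin N × Fin N)).sup' hPne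
        (fun p => ‖x p.1 t - x p.2 t‖)) (Ici (0:ℝ)) := by
      intro t ht
      exact (ContinuousAt.finset_sup'_apply hPne fun p _ =>
        ((hxc p.1 t ht).sub (hxc p.2 t ht)).norm).continuousWithinAt
    exact h2.congr fun t _ => hDeq t
  -- the velocity field
  set V : Fin N → ℝ → EuclideanSpace ℝ (Fin d) := fun i t =>
    (κ₂ / N) • ∑ j ∈ Finset.univ.erase i,
        Ψa i j t • ((‖x j t - x i t‖ ^ α)⁻¹ • (x j t - x i t)) +
    (κ₃ / N) • ∑ j ∈ Finset.univ.erase i,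
        Ψr i j t • ((‖x i t - x j t‖ ^ β)⁻¹ • (x i t - x j t)) with hV
  have hVd : ∀ p (t : ℝ), 0 ≤ t → HasDerivAt (x p) (V p t) t := hx
  -- key inequality
  have key : ∀ (t : ℝ) (p q : Fin N), p ≠ q → D t = ‖x p t - x q t‖ → D t ≤ δ₂ →
      0 ≤ ⟪x p t - x q t, V p t⟫ := by
    intro t p q hpq hDt hDle
    set u := x p t - x q t with hu
    have hinner : ∀ k : Fin N, 0 ≤ ⟪u, x p t - x k t⟫ := by
      intro k
      by_cases hk : k = q
      · rw [hk, ← hu, real_inner_self_eq_norm_sq]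
        positivity
      · have h1 : ‖x k t - x q t‖ ≤ D t := hDub t k q hk
        have he : (x k t - x p t) + u = x k t - x q t := by rw [hu]; abel
        have hw : ‖(x k t - x p t) + u‖ ≤ ‖u‖ := by
          rw [he, ← hDt]
          exact h1
        have hsq := norm_add_sq_real (x k t - x p t) u
        have hw2 : ‖(x k t - x p t) + u‖ ^ 2 ≤ ‖u‖ ^ 2 :=
          pow_le_pow_left₀ (norm_nonneg _) hw 2
        have h2 : ⟪x k t - x p t, u⟫ ≤ 0 := by nlinarith [sq_nonneg ‖x k t - x p t‖]
        have h3 : x p t - x k t = -(x k t - x p t) := by abel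
        rw [h3, inner_neg_right, real_inner_comm]
        linarith
    have hcoef : ∀ k : Fin N, k ≠ p →
        κ₂ * Ψa p k t * ((‖x p t - x k t‖ ^ α)⁻¹) ≤
        κ₃ * Ψr p k t * ((‖x p t - x k t‖ ^ β)⁻¹) := by
      intro k hk
      set r := ‖x p t - x k t‖ with hr
      rcases eq_or_lt_of_le (show (0:ℝ) ≤ r from norm_nonneg _) with h0 | hrpos
      · rw [← h0, Real.zero_rpow hαpos.ne', Real.zero_rpow hβpos.ne']
        simp
      · have hrD : r ≤ D t := hDub t p k (fun h => hk h.symm)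
        have hrδ : r ≤ δ₂ := hrD.trans hDle
        have h1 : r ^ (β - α) ≤ κ₃ * mr / (κ₂ * Ma) := by
          calc r ^ (β - α) ≤ δ₂ ^ (β - α) :=
                Real.rpow_le_rpow hrpos.le hrδ hβα.le
            _ = κ₃ * mr / (κ₂ * Ma) := by
                rw [hδ₂def, ← Real.rpow_mul hXpos.le, one_div, inv_mul_cancel₀ hβα.ne',
                  Real.rpow_one]
        have hrapos : 0 < r ^ α := Real.rpow_pos_of_pos hrpos α
        have hrbpos : 0 < r ^ β := Real.rpow_pos_of_pos hrpos β
        have h2 : κ₂ * Ma * r ^ β ≤ κ₃ * mr * r ^ α := by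
          have hsplit : r ^ β = r ^ α * r ^ (β - α) := by
            rw [← Real.rpow_add hrpos]; ring_nf
          rw [hsplit]
          calc κ₂ * Ma * (r ^ α * r ^ (β - α)) = (κ₂ * Ma * r ^ (β - α)) * r ^ α := by ring
            _ ≤ (κ₂ * Ma * (κ₃ * mr / (κ₂ * Ma))) * r ^ α := by
                have : κ₂ * Ma * r ^ (β - α) ≤ κ₂ * Ma * (κ₃ * mr / (κ₂ * Ma)) := by
                  apply mul_le_mul_of_nonneg_left h1 (by positivity)
                exact mul_le_mul_of_nonneg_right this hrapos.le
            _ = κ₃ * mr * r ^ α := by field_simp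
        have h3 : κ₂ * Ma / r ^ α ≤ κ₃ * mr / r ^ β := (div_le_div_iff₀ hrapos hrbpos).2 h2
        have hΨa' := hΨa p k t
        have hΨr' := hΨr p k t
        calc κ₂ * Ψa p k t * (r ^ α)⁻¹ ≤ κ₂ * Ma * (r ^ α)⁻¹ := by
              apply mul_le_mul_of_nonneg_right (mul_le_mul_of_nonneg_left hΨa'.2 hκ₂.le)
                (by positivity)
          _ = κ₂ * Ma / r ^ α := by rw [div_eq_mul_inv]
          _ ≤ κ₃ * mr / r ^ β := h3
          _ = κ₃ * mr * (r ^ β)⁻¹ := by rw [div_eq_mul_inv]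
          _ ≤ κ₃ * Ψr p k t * (r ^ β)⁻¹ := by
              apply mul_le_mul_of_nonneg_right (mul_le_mul_of_nonneg_left hΨr'.1 hκ₃.le)
                (by positivity)
    -- expand the inner product
    simp only [hV]
    simp only [inner_add_right, inner_smul_right, inner_sum]
    rw [Finset.mul_sum, Finset.mul_sum, ← Finset.sum_add_distrib]
    apply Finset.sum_nonneg
    intro k hk
    have hkp : k ≠ p := Finset.ne_of_mem_erase hk
    have hflip : x k t - x p t = -(x p t - x k t) := by abel
    rw [hflip, inner_neg_right, norm_neg]
    have heq : κ₂ / ↑N * (Ψa p k t * ((‖x p t - x k t‖ ^ α)⁻¹ * -⟪u, x p t - x k t⟫)) +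
        κ₃ / ↑N * (Ψr p k t * ((‖x p t - x k t‖ ^ β)⁻¹ * ⟪u, x p t - x k t⟫)) =
        (⟪u, x p t - x k t⟫ * (κ₃ * Ψr p k t * ((‖x p t - x k t‖ ^ β)⁻¹)) -
         ⟪u, x p t - x k t⟫ * (κ₂ * Ψa p k t * ((‖x p t - x k t‖ ^ α)⁻¹))) / ↑N := by
      ring
    rw [heq]
    apply div_nonneg _ hNpos.le
    have hmul := mul_le_mul_of_nonneg_left (hcoef k hkp) (hinner k)
    linarith
  -- main argument
  intro t₁ ht₁
  by_contra hcon
  push_neg at hcon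
  set δ : ℝ := min (D 0) δ₂ with hδdef
  have hδpos : 0 < δ := lt_min hD0 hδ₂
  have hδle₂ : δ ≤ δ₂ := min_le_right _ _
  have hδle₀ : δ ≤ D 0 := min_le_left _ _
  set lam₁ : ℝ := (2 * D t₁ + δ) / 3 with hlam₁def
  set lam₂ : ℝ := (D t₁ + 2 * δ) / 3 with hlam₂def
  have hDt₁nn : 0 ≤ D t₁ := hDnn t₁
  have hl₁pos : 0 < lam₁ := by rw [hlam₁def]; linarith
  have h₁₂ : lam₁ < lam₂ := by rw [hlam₁def, hlam₂def]; linarith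
  have hl₂δ : lam₂ < δ := by rw [hlam₂def]; linarith
  have hDl₁ : D t₁ < lam₁ := by rw [hlam₁def]; linarith
  -- the time b
  set S₁ : Set ℝ := Icc 0 t₁ ∩ D ⁻¹' (Iic lam₁) with hS₁
  have hS₁closed : IsClosed S₁ :=
    (hDcont.mono Icc_subset_Ici_self).preimage_isClosed_of_isClosed isClosed_Icc isClosed_Iic
  have hS₁ne : S₁.Nonempty := ⟨t₁, ⟨ht₁, le_rfl⟩, hDl₁.le⟩
  have hS₁bdd : BddBelow S₁ := ⟨0, fun t ht => ht.1.1⟩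
  set b : ℝ := sInf S₁ with hbdef
  have hbmem : b ∈ S₁ := hS₁closed.csInf_mem hS₁ne hS₁bdd
  have hb0 : 0 ≤ b := hbmem.1.1
  have hbt₁ : b ≤ t₁ := hbmem.1.2
  have hDb : D b ≤ lam₁ := hbmem.2
  have hbl : ∀ t ∈ Icc (0:ℝ) t₁, t < b → lam₁ < D t := by
    intro t ht htb
    by_contra hle
    push_neg at hle
    exact absurd (csInf_le hS₁bdd ⟨ht, hle⟩) (not_le.2 htb)
  -- the time a
  set S₂ : Set ℝ := Icc 0 b ∩ D ⁻¹' (Ici lam₂) with hS₂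
  have hS₂closed : IsClosed S₂ :=
    (hDcont.mono Icc_subset_Ici_self).preimage_isClosed_of_isClosed isClosed_Icc isClosed_Ici
  have hS₂ne : S₂.Nonempty := ⟨0, ⟨le_rfl, hb0⟩, by
    have : lam₂ < D 0 := lt_of_lt_of_le hl₂δ hδle₀
    exact this.le⟩
  have hS₂bdd : BddAbove S₂ := ⟨b, fun t ht => ht.1.2⟩
  set a : ℝ := sSup S₂ with hadef
  have hamem : a ∈ S₂ := hS₂closed.csSup_mem hS₂ne hS₂bdd
  have ha0 : 0 ≤ a := hamem.1.1
  have hab' : a ≤ b := hamem.1.2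
  have hDa : lam₂ ≤ D a := hamem.2
  have hab : a < b := by
    rcases lt_or_eq_of_le hab' with h | h
    · exact h
    · exfalso; rw [h] at hDa; linarith
  have har : ∀ t ∈ Icc (0:ℝ) b, a < t → D t < lam₂ := by
    intro t ht hta
    by_contra hle
    push_neg at hle
    exact absurd (le_csSup hS₂bdd ⟨ht, hle⟩) (not_le.2 hta)
  -- D a ≤ lam₂ via right limit
  have hDa_le : D a ≤ lam₂ := by
    have hcw : ContinuousWithinAt D (Ioi a) a :=
      (hDcont a ha0).mono (fun y hy => le_trans ha0 (le_of_lt hy))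
    have hev : ∀ᶠ s in nhdsWithin a (Ioi a), D s ≤ lam₂ := by
      filter_upwards [Ioc_mem_nhdsGT_of_mem (⟨le_rfl, hab⟩ : a ∈ Ico a b)] with s hs
      exact (har s ⟨le_trans ha0 hs.1.le, hs.2⟩ hs.1).le
    exact le_of_tendsto hcw hev
  have hsub : Icc a b ⊆ Ici (0:ℝ) := fun t ht => le_trans ha0 ht.1
  -- bounds on D over [a, b)
  have hDbound : ∀ s ∈ Ico a b, 0 < D s ∧ D s ≤ δ₂ := by
    intro s hs
    have hs0 : 0 ≤ s := le_trans ha0 hs.1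
    have hst₁ : s ∈ Icc (0:ℝ) t₁ := ⟨hs0, le_trans hs.2.le hbt₁⟩
    have hlow : lam₁ < D s := hbl s hst₁ hs.2
    have hup : D s ≤ lam₂ := by
      rcases eq_or_lt_of_le hs.1 with h | h
      · rw [← h]; exact hDa_le
      · exact (har s ⟨hs0, hs.2.le⟩ h).le
    exact ⟨lt_trans hl₁pos hlow, le_trans hup (le_trans hl₂δ.le hδle₂)⟩
  -- monotonicity of -D² on [a,b]
  have main : ∀ ⦃s : ℝ⦄, s ∈ Icc a b → -(D s ^ 2) ≤ -(D a ^ 2) := by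
    refine image_le_of_liminf_slope_right_le_deriv_boundary
      (B := fun _ => -(D a ^ 2)) (B' := fun _ => 0)
      ?_ le_rfl continuousOn_const (fun s _ => hasDerivWithinAt_const s _ _) ?_
    · exact ((hDcont.mono hsub).pow 2).neg
    · intro s hs r hr
      have hs0 : 0 ≤ s := le_trans ha0 hs.1
      obtain ⟨hDspos, hDsle⟩ := hDbound s hs
      obtain ⟨i, j, hij, hijD⟩ := (hD s).1
      set φ : ℝ → ℝ := fun z => -⟪x i z - x j z, x i z - x j z⟫ with hφ
      have hd : HasDerivAt (fun z => x i z - x j z) (V i s - V j s) s :=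
        (hVd i s hs0).sub (hVd j s hs0)
      have hφd : HasDerivAt φ
          (-(⟪x i s - x j s, V i s - V j s⟫ + ⟪V i s - V j s, x i s - x j s⟫)) s :=
        (hd.inner ℝ hd).neg
      have hkey1 : 0 ≤ ⟪x i s - x j s, V i s⟫ := key s i j hij hijD hDsle
      have hkey2 : 0 ≤ ⟪x j s - x i s, V j s⟫ :=
        key s j i hij.symm (hijD.trans (norm_sub_rev _ _)) hDsle
      have hφ'le : -(⟪x i s - x j s, V i s - V j s⟫ + ⟪V i s - V j s, x i s - x j s⟫) ≤ 0 := by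
        have h1 : ⟪x i s - x j s, V i s - V j s⟫ =
            ⟪x i s - x j s, V i s⟫ + ⟪x j s - x i s, V j s⟫ := by
          rw [inner_sub_right]
          have : x j s - x i s = -(x i s - x j s) := by abel
          rw [this, inner_neg_left]
          ring
        have h2 : ⟪V i s - V j s, x i s - x j s⟫ = ⟪x i s - x j s, V i s - V j s⟫ :=
          real_inner_comm _ _
        rw [h2, h1]
        linarith
      have htend : Tendsto (slope φ s) (nhdsWithin s (Ioi s)) (nhds
          (-(⟪x i s - x j s, V i s - V j s⟫ + ⟪V i s - V j s, x i s - x j s⟫))) :=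
        (hasDerivAt_iff_tendsto_slope.1 hφd).mono_left
          (nhdsWithin_mono s fun z hz => ne_of_gt hz)
      have hevφ : ∀ᶠ z in nhdsWithin s (Ioi s), slope φ s z < r :=
        htend.eventually_lt_const (lt_of_le_of_lt hφ'le hr)
      have hevle : ∀ᶠ z in nhdsWithin s (Ioi s),
          slope (fun y => -(D y ^ 2)) s z ≤ slope φ s z := by
        filter_upwards [self_mem_nhdsWithin] with z hz
        have hzpos : (0:ℝ) < z - s := sub_pos.2 hz
        have hfz : -(D z ^ 2) ≤ φ z := by
          rw [hφ]
          simp only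
          rw [real_inner_self_eq_norm_sq]
          have h1 : ‖x i z - x j z‖ ≤ D z := hDub z i j hij
          have h2 : ‖x i z - x j z‖ ^ 2 ≤ D z ^ 2 :=
            pow_le_pow_left₀ (norm_nonneg _) h1 2
          linarith
        have hfs : -(D s ^ 2) = φ s := by
          rw [hφ]
          simp only
          rw [real_inner_self_eq_norm_sq, hijD]
        rw [slope_def_field, slope_def_field]
        apply div_le_div_of_nonneg_right _ hzpos.le
        linarith
      have := hevle.and hevφ
      apply this.frequently.mono
      rintro z ⟨h1, h2⟩
      exact lt_of_le_of_lt h1 h2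
  -- contradiction
  have hfinal := main (right_mem_Icc.2 hab')
  have h1 : lam₂ ^ 2 ≤ D a ^ 2 := pow_le_pow_left₀ (by linarith) hDa 2
  have h2 : D b ^ 2 ≤ lam₁ ^ 2 := pow_le_pow_left₀ (hDnn b) hDb 2
  nlinarith
end

section
/- Let (S_i, I_i, R_i), i = 1,…,N, solve the networked SIR system with b^i > 0 and continuous nonnegative a^{ij}(t), with W_i(0) in the simplex {(S,I,R) ∈ [0,1]³ : S+I+R = 1}. Then for each i there exist limits S_i^∞ ∈ [0,1] and R_i^∞ ∈ [0,1] such that S_i(t) → S_i^∞, R_i(t) → R_i^∞, and I_i(t) → 0 as t → ∞. -/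
open Filter Topology
-- check FTC + const lemmas
lemma nonneg_of_linear_ode (f c : ℝ → ℝ) (hc : Continuous c)
    (hf : ∀ t, HasDerivAt f (c t * f t) t) (h0 : 0 ≤ f 0) (t : ℝ) : 0 ≤ f t := by
  set u : ℝ → ℝ := fun s => ∫ x in (0:ℝ)..s, c x with hudef
  have hu' : ∀ s, HasDerivAt u (c s) s := fun s =>
    intervalIntegral.integral_hasDerivAt_right (hc.intervalIntegrable 0 s)
      (hc.stronglyMeasurableAtFilter _ _) hc.continuousAt
  set g : ℝ → ℝ := fun s => f s * Real.exp (-u s) with hgdef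
  have hg' : ∀ s, HasDerivAt g 0 s := by
    intro s
    have h1 : HasDerivAt (fun s => Real.exp (-u s)) (Real.exp (-u s) * (-(c s))) s :=
      ((hu' s).neg).exp
    have h2 := (hf s).mul h1
    refine h2.congr_deriv ?_
    ring
  have hconst : g t = g 0 :=
    is_const_of_deriv_eq_zero (fun s => (hg' s).differentiableAt)
      (fun s => (hg' s).deriv) t 0
  have hu0 : u 0 = 0 := by simp [hudef]
  have : f t * Real.exp (-u t) = f 0 := by
    simpa [hgdef, hu0] using hconst
  nlinarith [Real.exp_pos (-u t), this]


lemma sir_I_nonneg (N : ℕ) (κ₁ : ℝ) (hκ : 0 < κ₁)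
    (b : Fin N → ℝ) (hb : ∀ i, 0 < b i)
    (a : Fin N → Fin N → ℝ → ℝ)
    (ha_nonneg : ∀ i j t, 0 ≤ a i j t)
    (M : ℝ) (hM0 : 0 ≤ M) (haM : ∀ i j (t : ℝ), a i j t ≤ M)
    (S I : Fin N → ℝ → ℝ)
    (hScont : ∀ j, Continuous (S j)) (hIcont : ∀ j, Continuous (I j))
    (hSnn : ∀ j t, 0 ≤ t → 0 ≤ S j t)
    (hI : ∀ i (t : ℝ), HasDerivAt (I i) (κ₁ * ∑ j, a i j t * S i t * I j t - b i * I i t) t)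
    (hI0 : ∀ j, 0 ≤ I j 0) :
    ∀ j (t : ℝ), 0 ≤ t → 0 ≤ I j t := by
  have main : ∀ T : ℝ, 0 ≤ T → ∀ j, ∀ t ∈ Set.Icc (0:ℝ) T, 0 ≤ I j t := by
    intro T hT
    -- bound on S over [0,T]
    obtain ⟨Sb, hSb0, hSb⟩ : ∃ Sb, 0 ≤ Sb ∧ ∀ j, ∀ t ∈ Set.Icc (0:ℝ) T, S j t ≤ Sb := by
      obtain ⟨C, hC⟩ := isCompact_Icc.exists_bound_of_continuousOn
        (f := fun t => ∑ j, |S j t|)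
        ((continuous_finset_sum _ fun j _ => (hScont j).abs).continuousOn)
      refine ⟨max C 0, le_max_right _ _, fun j t ht => ?_⟩
      have h1 : S j t ≤ ∑ k, |S k t| :=
        (le_abs_self _).trans (Finset.single_le_sum (f := fun k => |S k t|)
          (fun k _ => abs_nonneg _) (Finset.mem_univ j))
      have h2 := hC t ht
      rw [Real.norm_eq_abs] at h2
      exact h1.trans ((le_of_abs_le h2).trans (le_max_left _ _))
    set L : ℝ := κ₁ * M * Sb * N + 1 with hL
    have key : ∀ ε : ℝ, 0 < ε → ∀ j, ∀ t ∈ Set.Icc (0:ℝ) T, -(ε * Real.exp (L * t)) < I j t := by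
      intro ε hε
      by_contra hcon
      push_neg at hcon
      obtain ⟨j₀, t₀, ht₀, ht₀le⟩ := hcon
      set A : Set ℝ := {t | t ∈ Set.Icc (0:ℝ) T ∧ ∃ j, I j t + ε * Real.exp (L * t) ≤ 0} with hA
      have hexpc : Continuous fun s : ℝ => ε * Real.exp (L * s) :=
        continuous_const.mul (Real.continuous_exp.comp (continuous_const.mul continuous_id))
      have hA_closed : IsClosed A := by
        have : A = Set.Icc 0 T ∩ ⋃ j, {t | I j t + ε * Real.exp (L * t) ≤ 0} := by
          ext s; simp [hA, Set.mem_iUnion, and_comm]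
        rw [this]
        exact isClosed_Icc.inter (isClosed_iUnion_of_finite fun j =>
          isClosed_le ((hIcont j).add hexpc) continuous_const)
      have hA_ne : A.Nonempty := ⟨t₀, ht₀, j₀, by linarith⟩
      have hA_bdd : BddBelow A := ⟨0, fun s hs => hs.1.1⟩
      set c : ℝ := sInf A with hc
      have hcA : c ∈ A := hA_closed.csInf_mem hA_ne hA_bdd
      obtain ⟨⟨hc0, hcT⟩, j, hj⟩ := hcA
      have hcpos : 0 < c := by
        rcases lt_or_eq_of_le hc0 with h | h
        · exact h
        · exfalso
          rw [← h] at hj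
          simp at hj
          nlinarith [hI0 j, Real.exp_pos (L * 0), hj]
      have hbefore : ∀ s, 0 ≤ s → s < c → ∀ k, 0 < I k s + ε * Real.exp (L * s) := by
        intro s hs hsc k
        by_contra hk
        push_neg at hk
        have hsA : s ∈ A := ⟨⟨hs, hsc.le.trans hcT⟩, k, hk⟩
        exact absurd (csInf_le hA_bdd hsA) (not_le.mpr hsc)
      have h_at : ∀ k, 0 ≤ I k c + ε * Real.exp (L * c) := by
        intro k
        have hcont : ContinuousAt (fun s => I k s + ε * Real.exp (L * s)) c :=
          ((hIcont k).add hexpc).continuousAt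
        have htend : Tendsto (fun s => I k s + ε * Real.exp (L * s)) (𝓝[<] c)
            (𝓝 (I k c + ε * Real.exp (L * c))) :=
          (hcont.continuousWithinAt).tendsto
        refine ge_of_tendsto htend ?_
        filter_upwards [Ioo_mem_nhdsLT_of_mem (Set.mem_Ioc.mpr ⟨hcpos, le_refl c⟩)] with s hs
        exact (hbefore s hs.1.le hs.2 k).le
      -- derivative of g at c
      set e : ℝ := ε * Real.exp (L * c) with he
      have hepos : 0 < e := mul_pos hε (Real.exp_pos _)
      have hexp' : HasDerivAt (fun s => ε * Real.exp (L * s)) (e * L) c := by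
        have h1 : HasDerivAt (fun s : ℝ => L * s) L c := by
          simpa using (hasDerivAt_id c).const_mul L
        have := (h1.exp).const_mul ε
        simpa [he, mul_comm, mul_assoc, mul_left_comm] using this
      set d : ℝ := (κ₁ * ∑ k, a j k c * S j c * I k c - b j * I j c) + e * L with hd
      have hg : HasDerivAt (fun s => I j s + ε * Real.exp (L * s)) d c := (hI j c).add hexp'
      -- d ≤ 0 from left slopes
      have hd_le : d ≤ 0 := by
        have hgw : HasDerivWithinAt (fun s => I j s + ε * Real.exp (L * s)) d (Set.Iio c) c :=
          hg.hasDerivWithinAt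
        rw [hasDerivWithinAt_iff_tendsto_slope] at hgw
        have hdiff : Set.Iio c \ {c} = Set.Iio c := by
          apply Set.diff_singleton_eq_self; simp
        rw [hdiff] at hgw
        refine le_of_tendsto hgw ?_
        filter_upwards [Ioo_mem_nhdsLT_of_mem (Set.mem_Ioc.mpr ⟨hcpos, le_refl c⟩)] with s hs
        have h1 : 0 < I j s + ε * Real.exp (L * s) := hbefore s hs.1.le hs.2 j
        have h2 : I j c + ε * Real.exp (L * c) ≤ 0 := hj
        rw [slope_def_field]
        have hnum : 0 < (I j s + ε * Real.exp (L * s)) - (I j c + ε * Real.exp (L * c)) := by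
          linarith
        have hden : s - c < 0 := by linarith [hs.2]
        exact le_of_lt (div_neg_of_pos_of_neg hnum hden)
      -- d > 0 from the bounds
      have hd_pos : 0 < d := by
        have hterm : ∀ k : Fin N, -(M * Sb * e) ≤ a j k c * S j c * I k c := by
          intro k
          have hsk : 0 ≤ S j c := hSnn j c hc0
          have hsb : S j c ≤ Sb := hSb j c ⟨hc0, hcT⟩
          have hak : 0 ≤ a j k c := ha_nonneg j k c
          have haM' : a j k c ≤ M := haM j k c
          have hik : -e ≤ I k c := by linarith [h_at k]
          have p1 : 0 ≤ a j k c * S j c := mul_nonneg hak hsk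
          have p2 : a j k c * S j c * (-e) ≤ a j k c * S j c * I k c :=
            mul_le_mul_of_nonneg_left hik p1
          have p3 : a j k c * S j c ≤ M * Sb := mul_le_mul haM' hsb hsk hM0
          have p4 : a j k c * S j c * e ≤ M * Sb * e :=
            mul_le_mul_of_nonneg_right p3 hepos.le
          nlinarith
        have hsum : -(N * (M * Sb * e)) ≤ ∑ k, a j k c * S j c * I k c := by
          have := Finset.sum_le_sum (fun k (_ : k ∈ Finset.univ) => hterm k)
          calc -(N * (M * Sb * e)) = ∑ _k : Fin N, -(M * Sb * e) := by
                rw [Finset.sum_const, Finset.card_univ, Fintype.card_fin, nsmul_eq_mul]; ring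
          _ ≤ _ := this
        have hIj : I j c ≤ -e := by linarith [hj]
        have hbIj : 0 ≤ -(b j * I j c) := by nlinarith [hb j, hIj, hepos]
        have h1 : -(κ₁ * (N * (M * Sb * e))) ≤ κ₁ * ∑ k, a j k c * S j c * I k c := by
          nlinarith
        have hd' : d = κ₁ * ∑ k, a j k c * S j c * I k c - b j * I j c
            + e * (κ₁ * M * Sb * N + 1) := by rw [hd, hL]
        nlinarith [h1, hbIj, hepos, hd']
      linarith
    intro j t ht
    by_contra hneg
    push_neg at hneg
    have hexp := Real.exp_pos (L * t)
    have hε : 0 < -I j t / Real.exp (L * t) := div_pos (by linarith) hexp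
    have := key _ hε j t ht
    rw [div_mul_cancel₀ _ (ne_of_gt hexp)] at this
    linarith
  intro j t ht
  exact main t ht j t ⟨ht, le_refl t⟩


theorem networked_sir_relaxation (N : ℕ) (κ₁ : ℝ) (hκ : 0 < κ₁)
    (b : Fin N → ℝ) (hb : ∀ i, 0 < b i)
    (a : Fin N → Fin N → ℝ → ℝ)
    (ha_cont : ∀ i j, Continuous (a i j))
    (ha_nonneg : ∀ i j t, 0 ≤ a i j t)
    (ha_bdd : ∃ M : ℝ, ∀ i j (t : ℝ), a i j t ≤ M)
    (S I R : Fin N → ℝ → ℝ)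
    (hS : ∀ i (t : ℝ), HasDerivAt (S i) (-κ₁ * ∑ j, a i j t * S i t * I j t) t)
    (hI : ∀ i (t : ℝ), HasDerivAt (I i) (κ₁ * ∑ j, a i j t * S i t * I j t - b i * I i t) t)
    (hR : ∀ i (t : ℝ), HasDerivAt (R i) (b i * I i t) t)
    (hinit : ∀ i, S i 0 ∈ Set.Icc (0:ℝ) 1 ∧ I i 0 ∈ Set.Icc (0:ℝ) 1 ∧
      R i 0 ∈ Set.Icc (0:ℝ) 1 ∧ S i 0 + I i 0 + R i 0 = 1) :
    ∀ i, ∃ Sinf ∈ Set.Icc (0:ℝ) 1, ∃ Rinf ∈ Set.Icc (0:ℝ) 1,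
      Tendsto (S i) atTop (𝓝 Sinf) ∧ Tendsto (R i) atTop (𝓝 Rinf) ∧
      Tendsto (I i) atTop (𝓝 0) := by
  obtain ⟨M₀, hM₀⟩ := ha_bdd
  set M : ℝ := max M₀ 0 with hMdef
  have hM0 : 0 ≤ M := le_max_right _ _
  have haM : ∀ i j t, a i j t ≤ M := fun i j t => (hM₀ i j t).trans (le_max_left _ _)
  have hScont : ∀ j, Continuous (S j) := fun j =>
    Differentiable.continuous fun t => (hS j t).differentiableAt
  have hIcont : ∀ j, Continuous (I j) := fun j =>
    Differentiable.continuous fun t => (hI j t).differentiableAt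
  have hRcont : ∀ j, Continuous (R j) := fun j =>
    Differentiable.continuous fun t => (hR j t).differentiableAt
  -- S is nonnegative
  have hSnn : ∀ j t, 0 ≤ S j t := by
    intro j
    apply nonneg_of_linear_ode (S j) (fun t => -κ₁ * ∑ k, a j k t * I k t)
    · exact continuous_const.mul
        (continuous_finset_sum _ fun k _ => (ha_cont j k).mul (hIcont k))
    · intro t
      have h := hS j t
      have heq : -κ₁ * ∑ k, a j k t * S j t * I k t
          = (-κ₁ * ∑ k, a j k t * I k t) * S j t := by
        simp only [Finset.mul_sum, Finset.sum_mul]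
        exact Finset.sum_congr rfl fun k _ => by ring
      rw [heq] at h
      exact h
    · exact (hinit j).1.1
  -- I is nonnegative for t ≥ 0
  have hInn : ∀ j (t : ℝ), 0 ≤ t → 0 ≤ I j t :=
    sir_I_nonneg N κ₁ hκ b hb a ha_nonneg M hM0 haM S I hScont hIcont
      (fun j t _ => hSnn j t) hI (fun j => (hinit j).2.1.1)
  intro i
  -- the sum is constant equal to 1
  have hsum : ∀ t, S i t + I i t + R i t = 1 := by
    have hD : ∀ t, HasDerivAt (fun s => S i s + I i s + R i s) 0 t := by
      intro t
      have h := ((hS i t).add (hI i t)).add (hR i t)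
      refine h.congr_deriv ?_
      ring
    intro t
    have hc := is_const_of_deriv_eq_zero (fun s => (hD s).differentiableAt)
      (fun s => (hD s).deriv) t 0
    rw [hc, (hinit i).2.2.2]
  -- monotonicity
  have hSanti : AntitoneOn (S i) (Set.Ici (0:ℝ)) := by
    apply antitoneOn_of_deriv_nonpos (convex_Ici 0) (hScont i).continuousOn
      (fun t _ => (hS i t).differentiableAt.differentiableWithinAt)
    intro t ht
    rw [interior_Ici] at ht
    rw [(hS i t).deriv]
    apply mul_nonpos_of_nonpos_of_nonneg (by linarith)
    exact Finset.sum_nonneg fun k _ => mul_nonneg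
      (mul_nonneg (ha_nonneg i k t) (hSnn i t)) (hInn k t (le_of_lt ht))
  have hRmono : MonotoneOn (R i) (Set.Ici (0:ℝ)) := by
    apply monotoneOn_of_deriv_nonneg (convex_Ici 0) (hRcont i).continuousOn
      (fun t _ => (hR i t).differentiableAt.differentiableWithinAt)
    intro t ht
    rw [interior_Ici] at ht
    rw [(hR i t).deriv]
    exact mul_nonneg (hb i).le (hInn i t ht.le)
  -- bounds for t ≥ 0
  have hSle1 : ∀ t : ℝ, 0 ≤ t → S i t ≤ 1 := fun t ht =>
    (hSanti (Set.self_mem_Ici) ht ht).trans (hinit i).1.2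
  have hRge0 : ∀ t : ℝ, 0 ≤ t → 0 ≤ R i t := fun t ht =>
    (hinit i).2.2.1.1.trans (hRmono (Set.self_mem_Ici) ht ht)
  have hRle1 : ∀ t : ℝ, 0 ≤ t → R i t ≤ 1 := fun t ht => by
    have := hsum t; linarith [hSnn i t, hInn i t ht]
  -- convergence of S
  set Sm : ℝ → ℝ := fun t => S i (max t 0) with hSm
  have hSm_anti : Antitone Sm := fun t₁ t₂ h =>
    hSanti (le_max_right t₁ 0) (le_max_right t₂ 0) (max_le_max h le_rfl)
  have hSm_bdd : BddBelow (Set.range Sm) := ⟨0, by rintro x ⟨t, rfl⟩; exact hSnn i _⟩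
  set Sinf : ℝ := ⨅ t, Sm t with hSinf
  have hSm_tend : Tendsto Sm atTop (𝓝 Sinf) := tendsto_atTop_ciInf hSm_anti hSm_bdd
  have hStend : Tendsto (S i) atTop (𝓝 Sinf) := by
    apply hSm_tend.congr'
    filter_upwards [eventually_ge_atTop (0:ℝ)] with t ht
    simp [hSm, max_eq_left ht]
  -- convergence of R
  set Rm : ℝ → ℝ := fun t => R i (max t 0) with hRm
  have hRm_mono : Monotone Rm := fun t₁ t₂ h =>
    hRmono (le_max_right t₁ 0) (le_max_right t₂ 0) (max_le_max h le_rfl)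
  have hRm_bdd : BddAbove (Set.range Rm) :=
    ⟨1, by rintro x ⟨t, rfl⟩; exact hRle1 _ (le_max_right t 0)⟩
  set Rinf : ℝ := ⨆ t, Rm t with hRinf
  have hRm_tend : Tendsto Rm atTop (𝓝 Rinf) := tendsto_atTop_ciSup hRm_mono hRm_bdd
  have hRtend : Tendsto (R i) atTop (𝓝 Rinf) := by
    apply hRm_tend.congr'
    filter_upwards [eventually_ge_atTop (0:ℝ)] with t ht
    simp [hRm, max_eq_left ht]
  -- limits in [0,1]
  have hSinf_mem : Sinf ∈ Set.Icc (0:ℝ) 1 := by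
    constructor
    · exact ge_of_tendsto hStend (Eventually.of_forall fun t => hSnn i t)
    · refine le_of_tendsto hStend ?_
      filter_upwards [eventually_ge_atTop (0:ℝ)] with t ht using hSle1 t ht
  have hRinf_mem : Rinf ∈ Set.Icc (0:ℝ) 1 := by
    constructor
    · refine ge_of_tendsto hRtend ?_
      filter_upwards [eventually_ge_atTop (0:ℝ)] with t ht using hRge0 t ht
    · refine le_of_tendsto hRtend ?_
      filter_upwards [eventually_ge_atTop (0:ℝ)] with t ht using hRle1 t ht
  -- convergence of I
  have hItend : Tendsto (I i) atTop (𝓝 (1 - Sinf - Rinf)) := by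
    have h := ((tendsto_const_nhds (x := (1:ℝ)) (f := atTop)).sub hStend).sub hRtend
    exact h.congr fun t => by linarith [hsum t]
  have hIinf_nonneg : 0 ≤ 1 - Sinf - Rinf := by
    refine ge_of_tendsto hItend ?_
    filter_upwards [eventually_ge_atTop (0:ℝ)] with t ht using hInn i t ht
  have hIinf_zero : 1 - Sinf - Rinf = 0 := by
    by_contra hne
    have hpos : 0 < 1 - Sinf - Rinf := lt_of_le_of_ne hIinf_nonneg (Ne.symm hne)
    set J : ℝ := 1 - Sinf - Rinf with hJ
    have hev : ∀ᶠ t in atTop, J / 2 ≤ I i t :=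
      hItend.eventually (eventually_ge_nhds (by linarith))
    obtain ⟨T, hT⟩ := eventually_atTop.1 (hev.and (eventually_ge_atTop (0:ℝ)))
    set T₀ : ℝ := max T 0 with hT₀
    have hT₀0 : (0:ℝ) ≤ T₀ := le_max_right _ _
    have hIlow : ∀ t ∈ Set.Ici T₀, J / 2 ≤ I i t := fun t ht =>
      (hT t ((le_max_left T 0).trans ht)).1
    set cJ : ℝ := b i * J / 2 with hcJ
    have hcJpos : 0 < cJ := by
      have := hb i
      positivity
    have hφderiv : ∀ t, HasDerivAt (fun s => R i s - cJ * s) (b i * I i t - cJ) t := by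
      intro t
      have h1 : HasDerivAt (fun s : ℝ => cJ * s) cJ t := by
        simpa using (hasDerivAt_id t).const_mul cJ
      exact (hR i t).sub h1
    have hφmono : MonotoneOn (fun s => R i s - cJ * s) (Set.Ici T₀) := by
      apply monotoneOn_of_deriv_nonneg (convex_Ici T₀)
        (Differentiable.continuous fun t => (hφderiv t).differentiableAt).continuousOn
        (fun t _ => (hφderiv t).differentiableAt.differentiableWithinAt)
      intro t ht
      rw [interior_Ici] at ht
      rw [(hφderiv t).deriv]
      have h1 : J / 2 ≤ I i t := hIlow t (Set.mem_Ioi.mp ht).le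
      have h2 : b i * (J / 2) ≤ b i * I i t := mul_le_mul_of_nonneg_left h1 (hb i).le
      rw [hcJ]
      linarith
    set t₁ : ℝ := T₀ + 4 / cJ with ht₁
    have ht₁mem : t₁ ∈ Set.Ici T₀ := by
      simp only [Set.mem_Ici, ht₁]
      have : 0 < 4 / cJ := by positivity
      linarith
    have hmono := hφmono (Set.self_mem_Ici) ht₁mem (by simpa using ht₁mem)
    have hR1 : R i t₁ ≤ 1 := hRle1 t₁ (le_trans hT₀0 ht₁mem)
    have hR0 : 0 ≤ R i T₀ := hRge0 T₀ hT₀0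
    have hc4 : cJ * (4 / cJ) = 4 := by field_simp
    have hct : cJ * t₁ = cJ * T₀ + 4 := by rw [ht₁, mul_add, hc4]
    simp only at hmono
    linarith [hmono, hR1, hR0, hct]
  refine ⟨Sinf, hSinf_mem, Rinf, hRinf_mem, hStend, hRtend, ?_⟩
  rw [← hIinf_zero]
  exact hItend
end
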